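/- Let A' → H → G be an extension of a group G by a finite abelian group A', defined by a 2-cocycle h_f : G × G → A'. Assume h_f is strongly non-split: for every proper subgroup A'' < A' invariant under the action of G, the induced 2-cocycle G × G → A'/A'' is non-split. Then G has no proper subgroup of finite index if and only if H has no proper subgroup of finite index. -/
import Mathlib


/-- The extension of `G` by `A` (with an action of `G` on `A` by automorphisms)
defined by a 2-cocycle `h`: the group structure on `A × G` with multiplication
`(a₁,g₁)*(a₂,g₂) = (a₁ + g₁•a₂ + h g₁ g₂, g₁g₂)`. -/
def actExtGroup {G A : Type*} [Group G] [AddCommGroup A] [DistribMulAction G A]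
    (h : G → G → A)
    (hcoc : ∀ g₁ g₂ g₃ : G, h g₁ g₂ + h (g₁ * g₂) g₃ = h g₁ (g₂ * g₃) + g₁ • h g₂ g₃)
    (hl : ∀ g : G, h 1 g = 0) (hr : ∀ g : G, h g 1 = 0) : Group (A × G) :=
  letI : Mul (A × G) := ⟨fun p q => (p.1 + p.2 • q.1 + h p.2 q.2, p.2 * q.2)⟩
  letI : One (A × G) := ⟨((0 : A), (1 : G))⟩
  letI : Inv (A × G) := ⟨fun p => (-(p.2⁻¹ • p.1) - h p.2⁻¹ p.2, p.2⁻¹)⟩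
  Group.ofLeftAxioms
    (fun p q r => by
      refine Prod.ext ?_ (mul_assoc p.2 q.2 r.2)
      show p.1 + p.2 • q.1 + h p.2 q.2 + (p.2 * q.2) • r.1 + h (p.2 * q.2) r.2
          = p.1 + p.2 • (q.1 + q.2 • r.1 + h q.2 r.2) + h p.2 (q.2 * r.2)
      have key := hcoc p.2 q.2 r.2
      rw [smul_add, smul_add, mul_smul]
      calc p.1 + p.2 • q.1 + h p.2 q.2 + p.2 • (q.2 • r.1) + h (p.2 * q.2) r.2
          = p.1 + p.2 • q.1 + p.2 • (q.2 • r.1) + (h p.2 q.2 + h (p.2 * q.2) r.2) := by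
            abel
        _ = p.1 + p.2 • q.1 + p.2 • (q.2 • r.1) + (h p.2 (q.2 * r.2) + p.2 • h q.2 r.2) := by
            rw [key]
        _ = p.1 + (p.2 • q.1 + p.2 • (q.2 • r.1) + p.2 • h q.2 r.2) + h p.2 (q.2 * r.2) := by
            abel)
    (fun p => by
      refine Prod.ext ?_ (one_mul p.2)
      show 0 + (1 : G) • p.1 + h 1 p.2 = p.1
      rw [one_smul, hl]; abel)
    (fun p => by
      refine Prod.ext ?_ (inv_mul_cancel p.2)
      show -(p.2⁻¹ • p.1) - h p.2⁻¹ p.2 + p.2⁻¹ • p.1 + h p.2⁻¹ p.2 = 0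
      abel)

/-- Let `H = A' × G` be the extension of `G` by a finite abelian group `A'`
defined by a strongly non-split 2-cocycle `h_f` (for every proper `G`-invariant subgroup
`A'' < A'` the induced 2-cocycle with values in `A'/A''` is non-split). Then `G` has no
proper subgroup of finite index iff `H` has no proper subgroup of finite index. -/
theorem statement11 {G A' : Type*} [Group G] [AddCommGroup A'] [Finite A']
    [DistribMulAction G A']
    (h : G → G → A')
    (hcoc : ∀ g₁ g₂ g₃ : G, h g₁ g₂ + h (g₁ * g₂) g₃ = h g₁ (g₂ * g₃) + g₁ • h g₂ g₃)
    (hl : ∀ g : G, h 1 g = 0) (hr : ∀ g : G, h g 1 = 0)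
    (hsns : ∀ A'' : AddSubgroup A', (∀ (g : G), ∀ a ∈ A'', g • a ∈ A'') → A'' ≠ ⊤ →
      ¬ ∃ f : G → A', f 1 ∈ A'' ∧
        ∀ x y : G, h x y - (f x + x • f y - f (x * y)) ∈ A'') :
    letI : Group (A' × G) := actExtGroup h hcoc hl hr
    ((∀ K : Subgroup G, K.FiniteIndex → K = ⊤) ↔
      ∀ K : Subgroup (A' × G), K.FiniteIndex → K = ⊤) := by
  letI : Group (A' × G) := actExtGroup h hcoc hl hr
  show (∀ K : Subgroup G, K.FiniteIndex → K = ⊤) ↔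
      ∀ K : Subgroup (A' × G), K.FiniteIndex → K = ⊤
  have hmul : ∀ (a b : A') (x y : G),
      ((a, x) : A' × G) * (b, y) = (a + x • b + h x y, x * y) := fun _ _ _ _ => rfl
  have hinv : ∀ (a : A') (x : G),
      ((a, x) : A' × G)⁻¹ = (-(x⁻¹ • a) - h x⁻¹ x, x⁻¹) := fun _ _ => rfl
  have hone : (1 : A' × G) = ((0 : A'), (1 : G)) := rfl
  have hid : ∀ z : G, h z z⁻¹ = z • h z⁻¹ z := by
    intro z
    have := hcoc z z⁻¹ z
    rw [mul_inv_cancel, inv_mul_cancel, hl, hr] at this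
    simpa using this
  have hdiff : ∀ (u v : A') (z : G),
      ((u, z) : A' × G) * ((v, z) : A' × G)⁻¹ = (u - v, 1) := by
    intro u v z
    rw [hinv, hmul]
    refine Prod.ext ?_ (mul_inv_cancel z)
    rw [smul_sub, smul_neg, smul_inv_smul, hid]
    abel
  have hconj : ∀ (a b : A') (g : G),
      ((b, g) : A' × G) * (a, 1) * ((b, g) : A' × G)⁻¹ = (g • a, 1) := by
    intro a b g
    rw [hmul b a g 1, hr, add_zero, mul_one, hdiff]
    congr 1
    abel
  -- the projection homomorphism
  let π : (A' × G) →* G := { toFun := Prod.snd, map_one' := rfl, map_mul' := fun _ _ => rfl }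
  have hπ : Function.Surjective π := fun g => ⟨((0 : A'), g), rfl⟩
  constructor
  · -- forward direction
    intro hG K hK
    haveI := hK
    haveI : ((K.map π).comap π).FiniteIndex :=
      Subgroup.finiteIndex_of_le (Subgroup.le_comap_map π K)
    have hmapfi : (K.map π).FiniteIndex :=
      ⟨by rw [← Subgroup.index_comap_of_surjective _ hπ]; exact this.index_ne_zero⟩
    have hmapT : K.map π = ⊤ := hG _ hmapfi
    have hsurj : ∀ g : G, ∃ a : A', ((a, g) : A' × G) ∈ K := by
      intro g
      have : g ∈ K.map π := by rw [hmapT]; trivial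
      obtain ⟨p, hp, hpg⟩ := this
      exact ⟨p.1, by rwa [show ((p.1, g) : A' × G) = p from Prod.ext rfl hpg.symm]⟩
    set A'' : AddSubgroup A' :=
      { carrier := {a : A' | ((a, (1 : G)) : A' × G) ∈ K}
        zero_mem' := by show ((0, 1) : A' × G) ∈ K; rw [← hone]; exact K.one_mem
        add_mem' := by
          intro a b ha hb
          have := K.mul_mem ha hb
          rw [hmul] at this
          simpa [hl] using this
        neg_mem' := by
          intro a ha
          have := K.inv_mem ha
          rw [hinv] at this
          simpa [hl] using this } with hA''
    have hinvar : ∀ (g : G), ∀ a ∈ A'', g • a ∈ A'' := by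
      intro g a ha
      obtain ⟨b, hb⟩ := hsurj g
      have := K.mul_mem (K.mul_mem hb ha) (K.inv_mem hb)
      rwa [hconj] at this
    by_cases htop : A'' = ⊤
    · -- then K = ⊤
      rw [Subgroup.eq_top_iff']
      intro p
      obtain ⟨b, hb⟩ := hsurj p.2
      have h1 : ((p.1 - b, (1 : G)) : A' × G) ∈ K := by
        have : p.1 - b ∈ A'' := by rw [htop]; trivial
        exact this
      have hd := K.mul_mem h1 hb
      rw [hmul, one_smul, hl, add_zero, one_mul, sub_add_cancel] at hd
      exact hd
    · exfalso
      apply hsns A'' hinvar htop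
      choose s hs using hsurj
      refine ⟨fun g => -(s g), A''.neg_mem (hs 1), ?_⟩
      intro x y
      have hm := K.mul_mem (K.mul_mem (hs x) (hs y)) (K.inv_mem (hs (x * y)))
      rw [hmul (s x) (s y) x y, hdiff] at hm
      show h x y - (-(s x) + x • (-(s y)) - -(s (x * y))) ∈ A''
      have heq : h x y - (-(s x) + x • (-(s y)) - -(s (x * y)))
          = s x + x • s y + h x y - s (x * y) := by
        rw [smul_neg]; abel
      rw [heq]
      exact hm
  · -- reverse direction
    intro hH K hK
    have hfi : (K.comap π).FiniteIndex :=
      ⟨by rw [Subgroup.index_comap_of_surjective _ hπ]; exact hK.index_ne_zero⟩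
    have := hH _ hfi
    have h2 : K.comap π = (⊤ : Subgroup G).comap π := by rw [this, Subgroup.comap_top]
    exact Subgroup.comap_injective hπ h2
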